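/- arXiv:1406.5795 — 6 statements merged into one kernel-verified Lean document; each statement's English description precedes it below -/
import Mathlib

section
/- Let α be a measurable space and β a standard Borel space, let ρ be a finite measure on α × β, and let f : α → ℝ≥0∞ be measurable with 0 < f a < ∞ for every a ∈ α. Suppose the reweighted measure ρ' := ρ.withDensity (fun p => f p.1) is finite. Then the disintegration (regular conditional distribution) kernels of ρ' and ρ agree almost everywhere: for ρ'.fst-almost every a ∈ α, ρ'.condKernel a = ρ.condKernel a. -/
open MeasureTheory ProbabilityTheory ENNReal

/-
A density depending only on the first coordinate reweights the marginal and leaves the fibres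
alone: `ρ'.fst = ρ.fst.withDensity f`, and `ρ.fst.withDensity f ⊗ₘ ρ.condKernel` equals
`(ρ.fst ⊗ₘ ρ.condKernel).withDensity (f ∘ Prod.fst) = ρ'`. So `ρ.condKernel` disintegrates `ρ'`,
and uniqueness of the disintegration gives the claim.
-/

namespace MeasureTheory.Measure

variable {α β : Type*} {mα : MeasurableSpace α} {mβ : MeasurableSpace β}

theorem map_withDensity_comp (μ : Measure α) {g : α → β} (hg : Measurable g) {f : β → ℝ≥0∞}
    (hf : Measurable f) :
    (μ.withDensity (f ∘ g)).map g = (μ.map g).withDensity f := by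
  ext s hs
  rw [map_apply hg hs, withDensity_apply _ (hg hs), withDensity_apply _ hs,
    setLIntegral_map hs hf hg, Function.comp_def]

theorem fst_withDensity_fst (ρ : Measure (α × β)) {f : α → ℝ≥0∞} (hf : Measurable f) :
    (ρ.withDensity fun p ↦ f p.1).fst = ρ.fst.withDensity f :=
  map_withDensity_comp ρ measurable_fst hf

theorem withDensity_compProd_left (μ : Measure α) [SFinite μ] (κ : Kernel α β)
    [IsSFiniteKernel κ] {f : α → ℝ≥0∞} (hf : Measurable f) :
    μ.withDensity f ⊗ₘ κ = (μ ⊗ₘ κ).withDensity fun p ↦ f p.1 := by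
  refine ext_of_lintegral _ fun φ hφ ↦ ?_
  have hf₁ : Measurable fun p : α × β ↦ f p.1 := hf.comp measurable_fst
  rw [lintegral_compProd hφ,
    lintegral_withDensity_eq_lintegral_mul _ hf (hφ.lintegral_kernel_prod_right' (κ := κ)),
    lintegral_withDensity_eq_lintegral_mul _ hf₁ hφ, lintegral_compProd (hf₁.mul hφ)]
  exact lintegral_congr fun a ↦ (lintegral_const_mul _ (hφ.comp measurable_prodMk_left)).symm

end MeasureTheory.Measure

theorem condKernel_withDensity_fst_general {α β : Type*} [MeasurableSpace α]
    [MeasurableSpace β] [StandardBorelSpace β] [Nonempty β]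
    (ρ : Measure (α × β)) [IsFiniteMeasure ρ]
    (f : α → ℝ≥0∞) (hf : Measurable f)
    (ρ' : Measure (α × β)) (hρ' : ρ' = ρ.withDensity (fun p => f p.1))
    [IsFiniteMeasure ρ'] :
    ∀ᵐ a ∂ρ'.fst, ρ'.condKernel a = ρ.condKernel a := by
  have h_disintegrate : ρ' = ρ'.fst ⊗ₘ ρ.condKernel := by
    rw [hρ', Measure.fst_withDensity_fst ρ hf, Measure.withDensity_compProd_left _ _ hf,
      Measure.disintegrate]
  filter_upwards [eq_condKernel_of_measure_eq_compProd ρ.condKernel h_disintegrate] with a ha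
  exact ha.symm

theorem condKernel_withDensity_fst {α β : Type*} [MeasurableSpace α]
    [MeasurableSpace β] [StandardBorelSpace β] [Nonempty β]
    (ρ : Measure (α × β)) [IsFiniteMeasure ρ]
    (f : α → ℝ≥0∞) (hf : Measurable f)
    (hpos : ∀ a, 0 < f a) (hfin : ∀ a, f a < ∞)
    (ρ' : Measure (α × β)) (hρ' : ρ' = ρ.withDensity (fun p => f p.1))
    [IsFiniteMeasure ρ'] :
    ∀ᵐ a ∂ρ'.fst, ρ'.condKernel a = ρ.condKernel a :=
  condKernel_withDensity_fst_general ρ f hf ρ' hρ'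
end

section
/- Let ψ be a probability measure on a measurable space X, let γ > 0, and let h : X → ℝ≥0∞ be measurable with 0 < h y ≤ γ for every y ∈ X, and set π := ψ.withDensity h. Then for every x ∈ X and every measurable set A, the accepted-move mass of the independence Metropolis–Hastings kernel satisfies ∫⁻_{y ∈ A} min 1 (h y / h x) dψ(y) ≥ γ⁻¹ * π(A); consequently the full independence Metropolis–Hastings kernel K with target π and proposal ψ satisfies the one-step minorization K(x, A) ≥ γ⁻¹ π(A) for all x and A. -/
open MeasureTheory ENNReal

/-- The independence Metropolis–Hastings kernel with proposal `ψ` and target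
`ψ.withDensity h`: propose `y ∼ ψ`, accept with probability `min 1 (h y / h x)`,
otherwise stay at `x`. -/
noncomputable def mhKernel {X : Type*} [MeasurableSpace X]
    (ψ : Measure X) (h : X → ℝ≥0∞) (x : X) : Measure X :=
  ψ.withDensity (fun y => min 1 (h y / h x)) +
    (1 - ∫⁻ y, min 1 (h y / h x) ∂ψ) • Measure.dirac x

/-! Since `h ≤ γ`, the acceptance probability `min 1 (h y / h x)` dominates `h y / γ`
pointwise; integrating over `A` against `ψ` gives `γ⁻¹ π(A)`, and the accepted moves are
only part of the kernel. -/

lemma ENNReal.inv_mul_le_min_one_div {a b γ : ℝ≥0∞} (ha : a ≤ γ) (hb : b ≤ γ) :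
    γ⁻¹ * a ≤ min 1 (a / b) := by
  rw [mul_comm, ← div_eq_mul_inv]
  exact le_min (div_le_of_le_mul (by simpa using ha)) (ENNReal.div_le_div_left hb a)

lemma MeasureTheory.const_mul_withDensity_apply_le_setLIntegral {X : Type*} [MeasurableSpace X]
    {μ : Measure X} {f g : X → ℝ≥0∞} {c : ℝ≥0∞} {s : Set X} (hs : MeasurableSet s)
    (hfg : ∀ y, c * f y ≤ g y) :
    c * μ.withDensity f s ≤ ∫⁻ y in s, g y ∂μ := by
  rw [withDensity_apply f hs]
  exact (lintegral_const_mul_le c f).trans (lintegral_mono hfg)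

lemma setLIntegral_le_mhKernel_apply {X : Type*} [MeasurableSpace X]
    (ψ : Measure X) (h : X → ℝ≥0∞) (x : X) {A : Set X} (hA : MeasurableSet A) :
    ∫⁻ y in A, min 1 (h y / h x) ∂ψ ≤ mhKernel ψ h x A := by
  rw [mhKernel, Measure.add_apply, ← withDensity_apply _ hA]
  exact le_self_add

theorem independence_mh_minorization_general {X : Type*} [MeasurableSpace X]
    (ψ : Measure X)
    (γ : ℝ≥0∞)
    (h : X → ℝ≥0∞)
    (hle : ∀ y, h y ≤ γ) :
    (∀ x : X, ∀ A : Set X, MeasurableSet A →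
        γ⁻¹ * (ψ.withDensity h) A ≤ ∫⁻ y in A, min 1 (h y / h x) ∂ψ) ∧
    (∀ x : X, ∀ A : Set X, MeasurableSet A →
        γ⁻¹ * (ψ.withDensity h) A ≤ mhKernel ψ h x A) := by
  have accepted : ∀ x : X, ∀ A : Set X, MeasurableSet A →
      γ⁻¹ * (ψ.withDensity h) A ≤ ∫⁻ y in A, min 1 (h y / h x) ∂ψ := fun x _ hA =>
    const_mul_withDensity_apply_le_setLIntegral hA fun y =>
      ENNReal.inv_mul_le_min_one_div (hle y) (hle x)
  exact ⟨accepted, fun x _ hA =>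
    (accepted x _ hA).trans (setLIntegral_le_mhKernel_apply ψ h x hA)⟩

theorem independence_mh_minorization {X : Type*} [MeasurableSpace X]
    (ψ : Measure X) [IsProbabilityMeasure ψ]
    (γ : ℝ≥0∞) (hγ : 0 < γ)
    (h : X → ℝ≥0∞) (hm : Measurable h)
    (hpos : ∀ y, 0 < h y) (hle : ∀ y, h y ≤ γ) :
    (∀ x : X, ∀ A : Set X, MeasurableSet A →
        γ⁻¹ * (ψ.withDensity h) A ≤ ∫⁻ y in A, min 1 (h y / h x) ∂ψ) ∧
    (∀ x : X, ∀ A : Set X, MeasurableSet A →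
        γ⁻¹ * (ψ.withDensity h) A ≤ mhKernel ψ h x A) :=
  independence_mh_minorization_general ψ γ h hle
end

section
/- Let X be a measurable space, let c ∈ ℝ≥0∞ and let κ and κ̃ be (sub-Markov) kernels from X to X such that c * κ̃(x, A) ≤ κ(x, A) for every x ∈ X and every measurable set A. Then for every n ≥ 1, the n-fold compositions satisfy cⁿ * κ̃ⁿ(x, A) ≤ κⁿ(x, A) for every x and every measurable A. -/
open MeasureTheory ProbabilityTheory ENNReal

/-- The `n`-fold iterate of a kernel: `κ⁰ = δ_x`, `κⁿ⁺¹(x, ·) = (κⁿ(x, ·)).bind κ`. -/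
noncomputable def kernelIter {X : Type*} [MeasurableSpace X] (κ : Kernel X X) :
    ℕ → X → Measure X
  | 0 => fun x => Measure.dirac x
  | n + 1 => fun x => (kernelIter κ n x).bind (fun y => κ y)

theorem MeasureTheory.Measure.smul_bind_le_bind {α β : Type*} [MeasurableSpace α]
    [MeasurableSpace β] {μ ν : Measure α} {f g : α → Measure β} {c : ℝ≥0∞} (hμν : μ ≤ ν)
    (hfg : ∀ a, c • f a ≤ g a) (hg : Measurable g) : c • μ.bind f ≤ ν.bind g :=
  Measure.le_iff.mpr fun s hs => calc
    c * μ.bind f s ≤ c * ∫⁻ a, f a s ∂μ := by gcongr; exact Measure.bind_apply_le f hs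
    _ ≤ ∫⁻ a, c * f a s ∂μ := lintegral_const_mul_le c _
    _ ≤ ∫⁻ a, g a s ∂ν := lintegral_mono' hμν fun a => Measure.le_iff'.mp (hfg a) s
    _ = ν.bind g s := (Measure.bind_apply hs hg.aemeasurable).symm

theorem smul_kernelIter_le {X : Type*} [MeasurableSpace X] {c : ℝ≥0∞} {κ κ' : Kernel X X}
    (h : ∀ x, c • κ' x ≤ κ x) (n : ℕ) (x : X) :
    c ^ n • kernelIter κ' n x ≤ kernelIter κ n x := by
  induction n with
  | zero => simp [kernelIter]
  | succ n ih =>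
    calc c ^ (n + 1) • (kernelIter κ' n x).bind κ'
        = c • (c ^ n • kernelIter κ' n x).bind κ' := by
          rw [Measure.bind_smul, smul_smul, pow_succ']
      _ ≤ (kernelIter κ n x).bind κ := Measure.smul_bind_le_bind ih h κ.measurable

theorem kernel_comparison_iterate_general {X : Type*} [MeasurableSpace X]
    (c : ℝ≥0∞) (κ κ' : Kernel X X)
    (hle : ∀ x, ∀ A : Set X, MeasurableSet A → c * κ' x A ≤ κ x A) :
    ∀ n : ℕ, 1 ≤ n → ∀ x, ∀ A : Set X, MeasurableSet A →
      c ^ n * kernelIter κ' n x A ≤ kernelIter κ n x A := by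
  intro n _ x A hA
  have hκ : ∀ y, c • κ' y ≤ κ y := fun y => Measure.le_iff.mpr (hle y)
  exact Measure.le_iff.mp (smul_kernelIter_le hκ n x) A hA

theorem kernel_comparison_iterate {X : Type*} [MeasurableSpace X]
    (c : ℝ≥0∞) (κ κ' : Kernel X X)
    (hκ : ∀ x, κ x Set.univ ≤ 1) (hκ' : ∀ x, κ' x Set.univ ≤ 1)
    (hle : ∀ x, ∀ A : Set X, MeasurableSet A → c * κ' x A ≤ κ x A) :
    ∀ n : ℕ, 1 ≤ n → ∀ x, ∀ A : Set X, MeasurableSet A →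
      c ^ n * kernelIter κ' n x A ≤ kernelIter κ n x A :=
  kernel_comparison_iterate_general c κ κ' hle
end

section
/- Let X be a measurable space, let γ ≥ 1 and ε > 0, let ν be a probability measure on X, let n₀ ≥ 1, and let κ, κ̃ be (sub-Markov) kernels from X to X such that γ⁻¹ * κ̃(x, A) ≤ κ(x, A) for all x and measurable A, and such that κ̃ satisfies the minorization condition κ̃^{n₀}(x, A) ≥ ε ν(A) for all x and measurable A. Then κ satisfies the minorization condition κ^{n₀}(x, A) ≥ γ^{-n₀} ε ν(A) for all x and measurable A. -/
open MeasureTheory ProbabilityTheory ENNReal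

lemma MeasureTheory.Measure.smul_bind_le_bind_s12 {α β : Type*} [MeasurableSpace α]
    [MeasurableSpace β] {μ μ' : Measure α} {κ κ' : Kernel α β} {c d : ℝ≥0∞}
    (hμ : c • μ' ≤ μ) (hκ : ∀ a, d • κ' a ≤ κ a) :
    (c * d) • μ'.bind κ' ≤ μ.bind κ := by
  refine Measure.le_iff.mpr fun A hA => ?_
  rw [Measure.smul_apply, smul_eq_mul, Measure.bind_apply hA κ'.aemeasurable,
    Measure.bind_apply hA κ.aemeasurable]
  calc c * d * ∫⁻ a, κ' a A ∂μ'
      = ∫⁻ a, d * κ' a A ∂(c • μ') := by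
        rw [lintegral_smul_measure, lintegral_const_mul _ (κ'.measurable_coe hA), smul_eq_mul,
          mul_assoc]
    _ ≤ ∫⁻ a, κ a A ∂(c • μ') := lintegral_mono fun a => hκ a A
    _ ≤ ∫⁻ a, κ a A ∂μ := lintegral_mono' hμ le_rfl

lemma kernelIter_smul_le {X : Type*} [MeasurableSpace X] {κ κ' : Kernel X X} {c : ℝ≥0∞}
    (hκ : ∀ x, c • κ' x ≤ κ x) (n : ℕ) (x : X) :
    c ^ n • kernelIter κ' n x ≤ kernelIter κ n x := by
  induction n generalizing x with
  | zero => simp [kernelIter]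
  | succ n ih =>
    rw [pow_succ]
    exact Measure.smul_bind_le_bind_s12 (ih x) hκ

theorem minorization_transfer_general {X : Type*} [MeasurableSpace X]
    (γ ε : ℝ≥0∞)
    (ν : Measure X)
    (n₀ : ℕ)
    (κ κ' : Kernel X X)
    (hle : ∀ x, ∀ A : Set X, MeasurableSet A → γ⁻¹ * κ' x A ≤ κ x A)
    (hminor : ∀ x, ∀ A : Set X, MeasurableSet A → ε * ν A ≤ kernelIter κ' n₀ x A) :
    ∀ x, ∀ A : Set X, MeasurableSet A →
      γ⁻¹ ^ n₀ * ε * ν A ≤ kernelIter κ n₀ x A := by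
  intro x A hA
  have hdom : ∀ y, γ⁻¹ • κ' y ≤ κ y := fun y => Measure.le_iff.mpr (hle y)
  calc γ⁻¹ ^ n₀ * ε * ν A = γ⁻¹ ^ n₀ * (ε * ν A) := mul_assoc _ _ _
    _ ≤ γ⁻¹ ^ n₀ * kernelIter κ' n₀ x A := mul_le_mul_right (hminor x A hA) _
    _ ≤ kernelIter κ n₀ x A := kernelIter_smul_le hdom n₀ x A

theorem minorization_transfer {X : Type*} [MeasurableSpace X]
    (γ ε : ℝ≥0∞) (hγ : 1 ≤ γ) (hε : 0 < ε)
    (ν : Measure X) [IsProbabilityMeasure ν]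
    (n₀ : ℕ) (hn₀ : 1 ≤ n₀)
    (κ κ' : Kernel X X)
    (hκ : ∀ x, κ x Set.univ ≤ 1) (hκ' : ∀ x, κ' x Set.univ ≤ 1)
    (hle : ∀ x, ∀ A : Set X, MeasurableSet A → γ⁻¹ * κ' x A ≤ κ x A)
    (hminor : ∀ x, ∀ A : Set X, MeasurableSet A → ε * ν A ≤ kernelIter κ' n₀ x A) :
    ∀ x, ∀ A : Set X, MeasurableSet A →
      γ⁻¹ ^ n₀ * ε * ν A ≤ kernelIter κ n₀ x A :=
  minorization_transfer_general γ ε ν n₀ κ κ' hle hminor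
end

section
/- Let X be a measurable space, let κ be a Markov kernel from X to X, let ε ∈ (0, 1], and let ν be a probability measure on X such that κ(x, A) ≥ ε ν(A) for every x ∈ X and every measurable A (Doeblin minorization). Then for any two probability measures μ₁, μ₂ on X and every measurable set A, |(μ₁.bind κ)(A) − (μ₂.bind κ)(A)| ≤ (1 − ε) * (⨆ over measurable sets B of |μ₁(B) − μ₂(B)|). In particular, one step of κ contracts the total variation distance between probability measures by the factor (1 − ε). -/
open MeasureTheory ProbabilityTheory ENNReal

/-!
Subtracting the minorizing part, `κ(x, A) = ε ν(A) + g(x)` with `0 ≤ g ≤ 1 - ε`, and the constant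
`ε ν(A)` cancels between `μ₁.bind κ` and `μ₂.bind κ`. The remaining difference of integrals of `g`
is at most `(1 - ε) (μ₁ - μ₂)(X)`, because `μ₁ ≤ (μ₁ - μ₂) + μ₂`; and a Hahn decomposition
identifies `(μ₁ - μ₂)(X)` with `μ₁(s) - μ₂(s)` for a measurable set `s`.
-/

namespace MeasureTheory.Measure

variable {X : Type*} [MeasurableSpace X] {μ ν : Measure X} [IsFiniteMeasure μ] [IsFiniteMeasure ν]

theorem sub_apply_univ_le {D : ℝ≥0∞} (hD : ∀ B, MeasurableSet B → μ B - ν B ≤ D) :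
    (μ - ν) Set.univ ≤ D := by
  obtain ⟨s, hs⟩ := exists_isHahnDecomposition ν μ
  calc (μ - ν) Set.univ = (μ - ν) s + (μ - ν) sᶜ :=
        (measure_add_measure_compl hs.measurableSet).symm
    _ = μ s - ν s := by
        rw [sub_apply_eq_zero_of_isHahnDecomposition hs.compl, add_zero,
          ← restrict_apply_univ, restrict_sub_eq_restrict_sub_restrict hs.measurableSet,
          sub_apply MeasurableSet.univ hs.le_on, restrict_apply_univ, restrict_apply_univ]
    _ ≤ D := hD s hs.measurableSet

theorem lintegral_le_lintegral_add_mul_sub_apply_univ {g : X → ℝ≥0∞} {c : ℝ≥0∞}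
    (hg : ∀ x, g x ≤ c) : ∫⁻ x, g x ∂μ ≤ ∫⁻ x, g x ∂ν + c * (μ - ν) Set.univ :=
  calc ∫⁻ x, g x ∂μ ≤ ∫⁻ x, g x ∂(μ - ν + ν) :=
        lintegral_mono' (sub_le_iff_le_add.mp le_rfl) le_rfl
    _ = ∫⁻ x, g x ∂(μ - ν) + ∫⁻ x, g x ∂ν := lintegral_add_measure _ _ _
    _ ≤ c * (μ - ν) Set.univ + ∫⁻ x, g x ∂ν := by
        gcongr
        exact (lintegral_mono hg).trans_eq (lintegral_const c)
    _ = ∫⁻ x, g x ∂ν + c * (μ - ν) Set.univ := add_comm _ _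

theorem abs_toReal_sub_le_iSup {B : Set X} (hB : MeasurableSet B) :
    |(μ B).toReal - (ν B).toReal| ≤
      ⨆ (B : Set X) (_ : MeasurableSet B), |(μ B).toReal - (ν B).toReal| := by
  have hbound (B : Set X) :
      |(μ B).toReal - (ν B).toReal| ≤ μ.real Set.univ + ν.real Set.univ := by
    refine (abs_sub _ _).trans ?_
    rw [abs_of_nonneg toReal_nonneg, abs_of_nonneg toReal_nonneg]
    exact add_le_add (measureReal_mono (Set.subset_univ B)) (measureReal_mono (Set.subset_univ B))
  refine le_ciSup_of_le ⟨_, Set.forall_mem_range.2 fun B ↦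
    Real.iSup_le (fun _ ↦ hbound B) (by positivity)⟩ B ?_
  rw [ciSup_pos hB]

theorem apply_le_mul_add_of_mul_apply_compl_le {m ν : Measure X} [IsProbabilityMeasure m]
    [IsProbabilityMeasure ν] {ε : ℝ} (hε : ε ∈ Set.Icc (0 : ℝ) 1) {A : Set X}
    (hA : MeasurableSet A) (h : ENNReal.ofReal ε * ν Aᶜ ≤ m Aᶜ) :
    m A ≤ ENNReal.ofReal ε * ν A + ENNReal.ofReal (1 - ε) := by
  refine ENNReal.le_of_add_le_add_right (by finiteness : ENNReal.ofReal ε * ν Aᶜ ≠ ∞) ?_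
  calc m A + ENNReal.ofReal ε * ν Aᶜ ≤ m A + m Aᶜ := by gcongr
    _ = 1 := prob_add_prob_compl hA
    _ = ENNReal.ofReal ε * ν A + ENNReal.ofReal (1 - ε) + ENNReal.ofReal ε * ν Aᶜ := by
        rw [add_right_comm, ← mul_add, prob_add_prob_compl hA, mul_one,
          ← ofReal_add hε.1 (sub_nonneg.2 hε.2), add_sub_cancel, ofReal_one]

end MeasureTheory.Measure

theorem ENNReal.toReal_sub_toReal_le_iff {a b : ℝ≥0∞} {t : ℝ} (ha : a ≠ ∞) (hb : b ≠ ∞)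
    (ht : 0 ≤ t) : a.toReal - b.toReal ≤ t ↔ a - b ≤ ENNReal.ofReal t := by
  rw [← ofReal_le_ofReal_iff ht, ofReal_sub _ toReal_nonneg, ofReal_toReal ha, ofReal_toReal hb]

namespace ProbabilityTheory.Kernel

variable {X : Type*} [MeasurableSpace X]

theorem bind_apply_eq_lintegral_tsub_add (κ : Kernel X X) (μ : Measure X)
    [IsProbabilityMeasure μ] {A : Set X} (hA : MeasurableSet A) {c : ℝ≥0∞}
    (hc : ∀ x, c ≤ κ x A) :
    (μ.bind (fun x => κ x)) A = ∫⁻ x, (κ x A - c) ∂μ + c :=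
  calc (μ.bind (fun x => κ x)) A = ∫⁻ x, (κ x A - c + c) ∂μ := by
        rw [Measure.bind_apply hA κ.aemeasurable]
        exact lintegral_congr fun x ↦ (tsub_add_cancel_of_le (hc x)).symm
    _ = ∫⁻ x, (κ x A - c) ∂μ + c := by
        rw [lintegral_add_right _ measurable_const, MeasureTheory.lintegral_const, measure_univ,
          mul_one]

theorem bind_apply_tsub_le_of_minorization (κ : Kernel X X) [IsMarkovKernel κ] {ε : ℝ}
    (hε : ε ∈ Set.Icc (0 : ℝ) 1) {ν : Measure X} [IsProbabilityMeasure ν]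
    (hminor : ∀ x, ∀ A : Set X, MeasurableSet A → ENNReal.ofReal ε * ν A ≤ κ x A)
    {μ₁ μ₂ : Measure X} [IsProbabilityMeasure μ₁] [IsProbabilityMeasure μ₂] {D : ℝ≥0∞}
    (hD : ∀ B, MeasurableSet B → μ₁ B - μ₂ B ≤ D) {A : Set X} (hA : MeasurableSet A) :
    (μ₁.bind (fun x => κ x)) A - (μ₂.bind (fun x => κ x)) A ≤ ENNReal.ofReal (1 - ε) * D := by
  have hc (x : X) : ENNReal.ofReal ε * ν A ≤ κ x A := hminor x A hA
  have hresidual (x : X) : κ x A - ENNReal.ofReal ε * ν A ≤ ENNReal.ofReal (1 - ε) :=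
    tsub_le_iff_left.2 <| Measure.apply_le_mul_add_of_mul_apply_compl_le hε hA (hminor x _ hA.compl)
  rw [bind_apply_eq_lintegral_tsub_add κ μ₁ hA hc, bind_apply_eq_lintegral_tsub_add κ μ₂ hA hc,
    tsub_le_iff_left, add_right_comm]
  gcongr
  exact (Measure.lintegral_le_lintegral_add_mul_sub_apply_univ hresidual).trans
    (by gcongr; exact Measure.sub_apply_univ_le hD)

theorem toReal_bind_apply_sub_le_of_minorization (κ : Kernel X X) [IsMarkovKernel κ] {ε : ℝ}
    (hε : ε ∈ Set.Icc (0 : ℝ) 1) {ν : Measure X} [IsProbabilityMeasure ν]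
    (hminor : ∀ x, ∀ A : Set X, MeasurableSet A → ENNReal.ofReal ε * ν A ≤ κ x A)
    {μ₁ μ₂ : Measure X} [IsProbabilityMeasure μ₁] [IsProbabilityMeasure μ₂] {D : ℝ}
    (hD : ∀ B, MeasurableSet B → (μ₁ B).toReal - (μ₂ B).toReal ≤ D) {A : Set X}
    (hA : MeasurableSet A) :
    ((μ₁.bind (fun x => κ x)) A).toReal - ((μ₂.bind (fun x => κ x)) A).toReal ≤
      (1 - ε) * D := by
  have hD₀ : 0 ≤ D := by simpa using hD ∅ .empty
  rw [toReal_sub_toReal_le_iff (measure_ne_top _ _) (measure_ne_top _ _)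
    (mul_nonneg (sub_nonneg.2 hε.2) hD₀), ofReal_mul (sub_nonneg.2 hε.2)]
  exact bind_apply_tsub_le_of_minorization κ hε hminor (fun B hB ↦
    (toReal_sub_toReal_le_iff (measure_ne_top _ _) (measure_ne_top _ _) hD₀).1 (hD B hB)) hA

end ProbabilityTheory.Kernel

theorem doeblin_tv_contraction {X : Type*} [MeasurableSpace X]
    (κ : Kernel X X) [IsMarkovKernel κ]
    (ε : ℝ) (hε : ε ∈ Set.Ioc (0 : ℝ) 1)
    (ν : Measure X) [IsProbabilityMeasure ν]
    (hminor : ∀ x, ∀ A : Set X, MeasurableSet A → ENNReal.ofReal ε * ν A ≤ κ x A)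
    (μ₁ μ₂ : Measure X) [IsProbabilityMeasure μ₁] [IsProbabilityMeasure μ₂]
    (A : Set X) (hA : MeasurableSet A) :
    |((μ₁.bind (fun x => κ x)) A).toReal - ((μ₂.bind (fun x => κ x)) A).toReal| ≤
      (1 - ε) * ⨆ (B : Set X) (_ : MeasurableSet B), |(μ₁ B).toReal - (μ₂ B).toReal| := by
  have hTV (B : Set X) (hB : MeasurableSet B) :=
    abs_sub_le_iff.1 (Measure.abs_toReal_sub_le_iSup (μ := μ₁) (ν := μ₂) hB)
  have hε' : ε ∈ Set.Icc (0 : ℝ) 1 := Set.Ioc_subset_Icc_self hε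
  exact abs_sub_le_iff.2
    ⟨κ.toReal_bind_apply_sub_le_of_minorization hε' hminor (fun B hB ↦ (hTV B hB).1) hA,
      κ.toReal_bind_apply_sub_le_of_minorization hε' hminor (fun B hB ↦ (hTV B hB).2) hA⟩
end

section
/- Let X be a measurable space, let κ be a Markov kernel from X to X, let π be a probability measure on X with π.bind κ = π, let n₀ ≥ 1, ε ∈ (0, 1], and let ν be a probability measure on X such that the n₀-step iterate satisfies κ^{n₀}(x, A) ≥ ε ν(A) for every x ∈ X and every measurable A. Then for every initial probability measure μ on X, every n ∈ ℕ, and every measurable set A, |(μ.bind κⁿ)(A) − π(A)| ≤ (1 − ε)^{⌊n/n₀⌋}, where ⌊n/n₀⌋ is the greatest integer not exceeding n/n₀. -/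
open MeasureTheory ProbabilityTheory ENNReal

/-!
Doeblin's argument. If `P` satisfies `P(x, ·) ≥ ε ν` for every `x`, then `P(x, A) - ε ν(A)`
takes values in `[0, 1 - ε]`, so one step of `P` shrinks the setwise distance between two
probability measures by the factor `1 - ε`: integrating a function with values in `[0, M]`
against `μ₁ - μ₂`, split along a Hahn decomposition, gives at most `M` times that distance.
The target `π` is invariant under `P = κ ^ n₀`, so after `⌊n / n₀⌋` blocks of `n₀` steps the
distance to `π`, at most `1` initially, is at most `(1 - ε) ^ ⌊n / n₀⌋`.
-/

namespace ProbabilityTheory.Kernel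

variable {X : Type*} [MeasurableSpace X]

instance isMarkovKernel_pow (κ : Kernel X X) [IsMarkovKernel κ] : ∀ n, IsMarkovKernel (κ ^ n)
  | 0 => inferInstanceAs (IsMarkovKernel Kernel.id)
  | n + 1 =>
    have := isMarkovKernel_pow κ n
    inferInstanceAs (IsMarkovKernel ((κ ^ n) ∘ₖ κ))

lemma Invariant.pow {κ : Kernel X X} {π : Measure X} (hκ : κ.Invariant π) :
    ∀ n, (κ ^ n).Invariant π
  | 0 => by rw [pow_zero]; exact Measure.id_comp
  | n + 1 => by rw [pow_succ']; exact hκ.comp (hκ.pow n)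

end ProbabilityTheory.Kernel

lemma kernelIter_eq_pow {X : Type*} [MeasurableSpace X] (κ : Kernel X X) :
    ∀ n, kernelIter κ n = ⇑(κ ^ n)
  | 0 => by funext x; exact (Kernel.id_apply x).symm
  | n + 1 => by
    funext x
    rw [kernelIter, kernelIter_eq_pow κ n, pow_succ']
    exact (Kernel.comp_apply κ (κ ^ n) x).symm

namespace MeasureTheory

variable {X : Type*} [MeasurableSpace X]

lemma Measure.measureReal_comp_apply {Y : Type*} [MeasurableSpace Y] (μ : Measure X)
    (κ : Kernel X Y) [IsFiniteKernel κ] {s : Set Y} (hs : MeasurableSet s) :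
    (κ ∘ₘ μ).real s = ∫ x, (κ x).real s ∂μ := by
  rw [measureReal_def, Measure.bind_apply hs κ.aemeasurable]
  exact (integral_toReal (κ.measurable_coe hs).aemeasurable
    (ae_of_all _ fun x => measure_lt_top _ _)).symm

section BoundedIntegrand

variable {f : X → ℝ} {M : ℝ}

lemma integrable_of_nonneg_of_le (hf : Measurable f) (hf0 : ∀ x, 0 ≤ f x) (hfM : ∀ x, f x ≤ M)
    (μ : Measure X) [IsFiniteMeasure μ] : Integrable f μ :=
  .of_bound hf.aestronglyMeasurable M
    (ae_of_all _ fun x => (Real.norm_of_nonneg (hf0 x)).trans_le (hfM x))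

lemma integral_sub_integral_le_of_le {μ ν : Measure X} [IsFiniteMeasure ν] (hμν : μ ≤ ν)
    (hf : Measurable f) (hf0 : ∀ x, 0 ≤ f x) (hfM : ∀ x, f x ≤ M) :
    ∫ x, f x ∂ν - ∫ x, f x ∂μ ≤ M * (ν.real Set.univ - μ.real Set.univ) := by
  have : IsFiniteMeasure μ := isFiniteMeasure_of_le ν hμν
  have hint := integrable_of_nonneg_of_le hf hf0 hfM
  have hsplit : ν - μ + μ = ν := Measure.sub_add_cancel_of_le hμν
  have hmass : ν.real Set.univ = (ν - μ).real Set.univ + μ.real Set.univ := by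
    conv_lhs => rw [← hsplit]
    exact measureReal_add_apply
  calc ∫ x, f x ∂ν - ∫ x, f x ∂μ = ∫ x, f x ∂(ν - μ) := by
        conv_lhs => rw [← hsplit]
        rw [integral_add_measure (hint _) (hint _), add_sub_cancel_right]
    _ ≤ M * (ν - μ).real Set.univ :=
        (Real.le_norm_self _).trans (norm_integral_le_of_norm_le_const
          (ae_of_all _ fun x => (Real.norm_of_nonneg (hf0 x)).trans_le (hfM x)))
    _ = M * (ν.real Set.univ - μ.real Set.univ) := by rw [hmass, add_sub_cancel_right]

lemma integral_sub_integral_le_of_measureReal_sub_le {μ ν : Measure X} [IsFiniteMeasure μ]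
    [IsFiniteMeasure ν] (hf : Measurable f) (hf0 : ∀ x, 0 ≤ f x) (hfM : ∀ x, f x ≤ M)
    (hM : 0 ≤ M) {d : ℝ} (hd : ∀ s, MeasurableSet s → μ.real s - ν.real s ≤ d) :
    ∫ x, f x ∂μ - ∫ x, f x ∂ν ≤ M * d := by
  obtain ⟨s, hs, hνμ, hμν⟩ := hahn_decomposition μ ν
  have hint := integrable_of_nonneg_of_le hf hf0 hfM
  have hle_s : ν.restrict s ≤ μ.restrict s := Measure.le_iff.2 fun t ht => by
    rw [Measure.restrict_apply ht, Measure.restrict_apply ht]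
    exact hνμ _ (ht.inter hs) Set.inter_subset_right
  have hle_sc : μ.restrict sᶜ ≤ ν.restrict sᶜ := Measure.le_iff.2 fun t ht => by
    rw [Measure.restrict_apply ht, Measure.restrict_apply ht]
    exact hμν _ (ht.inter hs.compl) Set.inter_subset_right
  have h_on_s := integral_sub_integral_le_of_le hle_s hf hf0 hfM
  have h_on_sc := integral_mono_measure hle_sc (ae_of_all _ hf0) (hint _)
  rw [measureReal_restrict_apply_univ, measureReal_restrict_apply_univ] at h_on_s
  calc ∫ x, f x ∂μ - ∫ x, f x ∂ν
      = (∫ x in s, f x ∂μ - ∫ x in s, f x ∂ν) + (∫ x in sᶜ, f x ∂μ - ∫ x in sᶜ, f x ∂ν) := by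
        rw [← integral_add_compl hs (hint μ), ← integral_add_compl hs (hint ν)]
        ring
    _ ≤ M * (μ.real s - ν.real s) + 0 := add_le_add h_on_s (sub_nonpos.2 h_on_sc)
    _ ≤ M * d := by simpa using mul_le_mul_of_nonneg_left (hd s hs) hM

lemma abs_integral_sub_integral_le {μ ν : Measure X} [IsFiniteMeasure μ] [IsFiniteMeasure ν]
    (hf : Measurable f) (hf0 : ∀ x, 0 ≤ f x) (hfM : ∀ x, f x ≤ M) (hM : 0 ≤ M) {d : ℝ}
    (hd : ∀ s, MeasurableSet s → |μ.real s - ν.real s| ≤ d) :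
    |∫ x, f x ∂μ - ∫ x, f x ∂ν| ≤ M * d :=
  abs_sub_le_iff.2
    ⟨integral_sub_integral_le_of_measureReal_sub_le hf hf0 hfM hM fun s hs =>
      (le_abs_self _).trans (hd s hs),
    integral_sub_integral_le_of_measureReal_sub_le hf hf0 hfM hM fun s hs =>
      (le_abs_self _).trans (abs_sub_comm (μ.real s) _ ▸ hd s hs)⟩

end BoundedIntegrand

end MeasureTheory

namespace ProbabilityTheory.Kernel

variable {X : Type*} [MeasurableSpace X] {K : Kernel X X} [IsMarkovKernel K] {ε : ℝ}
  {ν : Measure X} [IsProbabilityMeasure ν]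

lemma abs_measureReal_comp_sub_comp_le (hε0 : 0 ≤ ε) (hε1 : ε ≤ 1)
    (hminor : ∀ x, ∀ A : Set X, MeasurableSet A → ENNReal.ofReal ε * ν A ≤ K x A)
    {μ₁ μ₂ : Measure X} [IsProbabilityMeasure μ₁] [IsProbabilityMeasure μ₂] {d : ℝ}
    (hd : ∀ s, MeasurableSet s → |μ₁.real s - μ₂.real s| ≤ d) {A : Set X} (hA : MeasurableSet A) :
    |(K ∘ₘ μ₁).real A - (K ∘ₘ μ₂).real A| ≤ (1 - ε) * d := by
  have hminor_real : ∀ x B, MeasurableSet B → ε * ν.real B ≤ (K x).real B := fun x B hB => by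
    have := ENNReal.toReal_mono (measure_ne_top _ _) (hminor x B hB)
    rwa [toReal_mul, toReal_ofReal hε0] at this
  -- Removing the common component `ε ν` leaves an integrand with values in `[0, 1 - ε]`; the
  -- removed constant cancels because both measures have mass one.
  set c := ε * ν.real A
  have hf0 : ∀ x, 0 ≤ (K x).real A - c := fun x => sub_nonneg.2 (hminor_real x A hA)
  have hfM : ∀ x, (K x).real A - c ≤ 1 - ε := fun x => by
    have := hminor_real x Aᶜ hA.compl
    rw [probReal_compl_eq_one_sub hA, probReal_compl_eq_one_sub hA] at this
    linarith
  have hmeas : Measurable fun x => (K x).real A := (K.measurable_coe hA).ennreal_toReal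
  have hcomp : ∀ (ρ : Measure X) [IsProbabilityMeasure ρ],
      (K ∘ₘ ρ).real A = ∫ x, ((K x).real A - c) ∂ρ + c := fun ρ _ => by
    have hint := integrable_of_nonneg_of_le hmeas (fun x => measureReal_nonneg)
      (fun x => measureReal_le_one) ρ
    rw [Measure.measureReal_comp_apply ρ K hA, integral_sub hint (integrable_const c),
      MeasureTheory.integral_const, probReal_univ, one_smul, sub_add_cancel]
  rw [hcomp μ₁, hcomp μ₂, add_sub_add_right_eq_sub]
  exact abs_integral_sub_integral_le (hmeas.sub_const c) hf0 hfM (by linarith) hd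

variable {π : Measure X} [IsProbabilityMeasure π]

lemma abs_measureReal_pow_comp_sub_le (hπ : K.Invariant π) (hε0 : 0 ≤ ε) (hε1 : ε ≤ 1)
    (hminor : ∀ x, ∀ A : Set X, MeasurableSet A → ENNReal.ofReal ε * ν A ≤ K x A)
    (μ : Measure X) [IsProbabilityMeasure μ] (k : ℕ) {A : Set X} (hA : MeasurableSet A) :
    |((K ^ k) ∘ₘ μ).real A - π.real A| ≤ (1 - ε) ^ k := by
  induction k generalizing A with
  | zero =>
    rw [_root_.pow_zero (1 - ε)]
    exact abs_sub_le_of_nonneg_of_le measureReal_nonneg measureReal_le_one measureReal_nonneg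
      measureReal_le_one
  | succ k ih =>
    rw [Nat.add_comm k 1, Kernel.pow_add, pow_one, ← Measure.comp_assoc, ← hπ.def,
      _root_.pow_add, pow_one]
    exact abs_measureReal_comp_sub_comp_le hε0 hε1 hminor (fun s hs => ih hs) hA

end ProbabilityTheory.Kernel

theorem uniform_ergodicity_of_minorization_general {X : Type*} [MeasurableSpace X]
    (κ : Kernel X X) [IsMarkovKernel κ]
    (π : Measure X) [IsProbabilityMeasure π] (hπ : π.bind (fun x => κ x) = π)
    (n₀ : ℕ)
    (ε : ℝ) (hε : ε ∈ Set.Ioc (0 : ℝ) 1)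
    (ν : Measure X) [IsProbabilityMeasure ν]
    (hminor : ∀ x, ∀ A : Set X, MeasurableSet A →
      ENNReal.ofReal ε * ν A ≤ kernelIter κ n₀ x A) :
    ∀ (μ : Measure X), IsProbabilityMeasure μ → ∀ (n : ℕ) (A : Set X), MeasurableSet A →
      |((μ.bind (kernelIter κ n)) A).toReal - (π A).toReal| ≤ (1 - ε) ^ (n / n₀) := by
  intro μ _ n A hA
  rw [kernelIter_eq_pow] at hminor
  have hsplit : κ ^ n = ((κ ^ n₀) ^ (n / n₀)) ∘ₖ (κ ^ (n % n₀)) := by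
    rw [← pow_mul, ← Kernel.pow_add, Nat.div_add_mod]
  rw [kernelIter_eq_pow, hsplit, ← Measure.comp_assoc]
  exact Kernel.abs_measureReal_pow_comp_sub_le (Kernel.Invariant.pow hπ n₀) hε.1.le hε.2 hminor
    _ _ hA

theorem uniform_ergodicity_of_minorization {X : Type*} [MeasurableSpace X]
    (κ : Kernel X X) [IsMarkovKernel κ]
    (π : Measure X) [IsProbabilityMeasure π] (hπ : π.bind (fun x => κ x) = π)
    (n₀ : ℕ) (hn₀ : 1 ≤ n₀)
    (ε : ℝ) (hε : ε ∈ Set.Ioc (0 : ℝ) 1)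
    (ν : Measure X) [IsProbabilityMeasure ν]
    (hminor : ∀ x, ∀ A : Set X, MeasurableSet A →
      ENNReal.ofReal ε * ν A ≤ kernelIter κ n₀ x A) :
    ∀ (μ : Measure X), IsProbabilityMeasure μ → ∀ (n : ℕ) (A : Set X), MeasurableSet A →
      |((μ.bind (kernelIter κ n)) A).toReal - (π A).toReal| ≤ (1 - ε) ^ (n / n₀) :=
  uniform_ergodicity_of_minorization_general κ π hπ n₀ ε hε ν hminor
end
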